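/- (Bretagnolle–Huber inequality) For any two probability measures P and Q on the same measurable space, the total variation distance satisfies TV(P,Q) ≤ √(1 − exp(−KL(Q‖P))). -/

import Mathlib

/-!
Write `f = dQ/dP` and `m = ∫ min f 1 dP`. For every event, `|P A - Q A| ≤ 1 - m`, and since
`∫ f dP = 1` we also have `∫ max f 1 dP = 2 - m`. The Hellinger affinity `∫ √f dP` is at least
`exp (-KL(Q‖P) / 2)` by Jensen's inequality for `exp` under `Q`, and at most `√(m (2 - m))` by
Cauchy–Schwarz applied to `√f = √(min f 1) √(max f 1)`. Hence
`exp (-KL) ≤ m (2 - m) = 1 - (1 - m)²`, which is the claim.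
-/

open MeasureTheory Real

section RealFunctions

variable {α : Type*} [MeasurableSpace α] {μ : Measure α}

lemma memLp_two_sqrt {f : α → ℝ} (hf0 : 0 ≤ᵐ[μ] f) (hf : Integrable f μ) :
    MemLp (fun x ↦ √(f x)) 2 μ := by
  refine (memLp_two_iff_integrable_sq
    (continuous_sqrt.comp_aestronglyMeasurable hf.aestronglyMeasurable)).2 (hf.congr ?_)
  filter_upwards [hf0] with x hx
  exact (sq_sqrt hx).symm

lemma integral_sqrt_mul_le_sqrt_mul_sqrt {g h : α → ℝ} (hg0 : 0 ≤ᵐ[μ] g) (hh0 : 0 ≤ᵐ[μ] h)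
    (hg : Integrable g μ) (hh : Integrable h μ) :
    ∫ x, √(g x * h x) ∂μ ≤ √(∫ x, g x ∂μ) * √(∫ x, h x ∂μ) := by
  have hsq {k : α → ℝ} (hk0 : 0 ≤ᵐ[μ] k) : ∫ x, √(k x) ^ (2 : ℝ) ∂μ = ∫ x, k x ∂μ := by
    refine integral_congr_ae ?_
    filter_upwards [hk0] with x hx
    rw [rpow_two, sq_sqrt hx]
  have holder := integral_mul_le_Lp_mul_Lq_of_nonneg HolderConjugate.two_two
    (.of_forall fun x ↦ sqrt_nonneg (g x)) (.of_forall fun x ↦ sqrt_nonneg (h x))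
    (by simpa using memLp_two_sqrt hg0 hg) (by simpa using memLp_two_sqrt hh0 hh)
  rw [hsq hg0, hsq hh0, ← sqrt_eq_rpow, ← sqrt_eq_rpow] at holder
  refine le_of_eq_of_le (integral_congr_ae ?_) holder
  filter_upwards [hg0] with x hx
  exact sqrt_mul hx _

lemma setIntegral_le_integral_of_le {g h : α → ℝ} (hg : Integrable g μ) (hh : Integrable h μ)
    (hgh : g ≤ h) (hh0 : 0 ≤ h) (A : Set α) : ∫ x in A, g x ∂μ ≤ ∫ x, h x ∂μ :=
  (setIntegral_mono hg.integrableOn hh.integrableOn hgh).trans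
    (setIntegral_le_integral hh (.of_forall hh0))

variable [IsFiniteMeasure μ] {f : α → ℝ}

lemma integral_min_one_add_integral_max_one (hf : Integrable f μ) :
    ∫ x, min (f x) 1 ∂μ + ∫ x, max (f x) 1 ∂μ = ∫ x, f x ∂μ + μ.real Set.univ := by
  have hmin : Integrable (fun x ↦ min (f x) 1) μ := hf.inf (integrable_const 1)
  have hmax : Integrable (fun x ↦ max (f x) 1) μ := hf.sup (integrable_const 1)
  simp_rw [← integral_add hmin hmax, min_add_max, integral_add hf (integrable_const 1),
    integral_const, smul_eq_mul, mul_one]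

lemma integral_sqrt_le_sqrt_integral_min_mul_max (hf0 : 0 ≤ᵐ[μ] f) (hf : Integrable f μ) :
    ∫ x, √(f x) ∂μ ≤ √(∫ x, min (f x) 1 ∂μ) * √(∫ x, max (f x) 1 ∂μ) := by
  have hmin0 : 0 ≤ᵐ[μ] fun x ↦ min (f x) 1 := by
    filter_upwards [hf0] with x hx
    exact le_min hx zero_le_one
  have hmax0 : 0 ≤ᵐ[μ] fun x ↦ max (f x) 1 :=
    .of_forall fun x ↦ zero_le_one.trans (le_max_right _ _)
  simpa only [min_mul_max, mul_one] using integral_sqrt_mul_le_sqrt_mul_sqrt hmin0 hmax0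
    (hf.inf (integrable_const 1)) (hf.sup (integrable_const 1))

lemma abs_measureReal_sub_setIntegral_le [IsProbabilityMeasure μ] (hf : Integrable f μ)
    (hf1 : ∫ x, f x ∂μ = 1) (A : Set α) :
    |μ.real A - ∫ x in A, f x ∂μ| ≤ 1 - ∫ x, min (f x) 1 ∂μ := by
  have hmin : Integrable (fun x ↦ min (f x) 1) μ := hf.inf (integrable_const 1)
  have hmax : Integrable (fun x ↦ max (f x) 1) μ := hf.sup (integrable_const 1)
  have hsum := integral_min_one_add_integral_max_one hf
  rw [hf1, probReal_univ] at hsum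
  have hone : ∫ x in A, (1 : ℝ) ∂μ = μ.real A := by simp
  rw [abs_sub_le_iff, ← hone, ← integral_sub (integrable_const 1).integrableOn hf.integrableOn,
    ← integral_sub hf.integrableOn (integrable_const 1).integrableOn]
  constructor
  · calc ∫ x in A, (1 - f x) ∂μ ≤ ∫ x, (1 - min (f x) 1) ∂μ :=
          setIntegral_le_integral_of_le ((integrable_const 1).sub hf)
            ((integrable_const 1).sub hmin) (fun x ↦ sub_le_sub_left (min_le_left _ _) 1)
            (fun x ↦ sub_nonneg.2 (min_le_right _ _)) A
      _ = 1 - ∫ x, min (f x) 1 ∂μ := by simp [integral_sub (integrable_const 1) hmin]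
  · calc ∫ x in A, (f x - 1) ∂μ ≤ ∫ x, (max (f x) 1 - 1) ∂μ :=
          setIntegral_le_integral_of_le (hf.sub (integrable_const 1))
            (hmax.sub (integrable_const 1)) (fun x ↦ sub_le_sub_right (le_max_left _ _) 1)
            (fun x ↦ sub_nonneg.2 (le_max_right _ _)) A
      _ = 1 - ∫ x, min (f x) 1 ∂μ := by
          rw [integral_sub hmax (integrable_const 1), integral_const, probReal_univ, smul_eq_mul,
            mul_one]
          linarith

end RealFunctions

lemma mul_exp_neg_log_div_two {t : ℝ} (ht : 0 ≤ t) : t * exp (-log t / 2) = √t := by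
  rcases ht.eq_or_lt with rfl | ht
  · simp
  · rw [neg_div, ← log_sqrt ht.le, exp_neg, exp_log (sqrt_pos.2 ht), ← div_eq_mul_inv, div_sqrt]

lemma exp_neg_integral_llr_div_two_le_integral_sqrt_rnDeriv {α : Type*} [MeasurableSpace α]
    {P Q : Measure α} [IsFiniteMeasure P] [IsProbabilityMeasure Q] (hQP : Q ≪ P)
    (h_int : Integrable (llr Q P) Q) :
    exp (-(∫ x, llr Q P x ∂Q) / 2) ≤ ∫ x, √(Q.rnDeriv P x).toReal ∂P := by
  have hkey : (fun x ↦ (Q.rnDeriv P x).toReal • exp (-llr Q P x / 2)) =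
      fun x ↦ √(Q.rnDeriv P x).toReal :=
    funext fun x ↦ mul_exp_neg_log_div_two ENNReal.toReal_nonneg
  have hsqrt_int : Integrable (fun x ↦ √(Q.rnDeriv P x).toReal) P :=
    (memLp_two_sqrt (.of_forall fun _ ↦ ENNReal.toReal_nonneg)
      Measure.integrable_toReal_rnDeriv).integrable one_le_two
  have hexp_int : Integrable (fun x ↦ exp (-llr Q P x / 2)) Q :=
    (integrable_rnDeriv_smul_iff hQP).1 (hkey ▸ hsqrt_int)
  calc exp (-(∫ x, llr Q P x ∂Q) / 2) = exp (∫ x, -llr Q P x / 2 ∂Q) := by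
        rw [integral_div, integral_neg]
    _ ≤ ∫ x, exp (-llr Q P x / 2) ∂Q :=
        convexOn_exp.map_integral_le continuousOn_exp isClosed_univ
          (.of_forall fun _ ↦ Set.mem_univ _) (h_int.neg.div_const 2) hexp_int
    _ = ∫ x, √(Q.rnDeriv P x).toReal ∂P := by rw [← integral_rnDeriv_smul hQP, hkey]

theorem bretagnolle_huber_general
    {α : Type*} [MeasurableSpace α]
    (P Q : Measure α) [IsProbabilityMeasure P] [IsProbabilityMeasure Q]
    (hQP : Q ≪ P) (h_int : Integrable (llr Q P) Q)
    (A : Set α) :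
    |(P A).toReal - (Q A).toReal| ≤
      Real.sqrt (1 - Real.exp (-(∫ x, llr Q P x ∂Q))) := by
  set f : α → ℝ := fun x ↦ (Q.rnDeriv P x).toReal
  set m := ∫ x, min (f x) 1 ∂P
  have hf : Integrable f P := Measure.integrable_toReal_rnDeriv
  have hf1 : ∫ x, f x ∂P = 1 := by simp [f, Measure.integral_toReal_rnDeriv hQP]
  have hTV : |(P A).toReal - (Q A).toReal| ≤ 1 - m := by
    have h := abs_measureReal_sub_setIntegral_le hf hf1 A
    rwa [Measure.setIntegral_toReal_rnDeriv hQP A] at h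
  have hM : ∫ x, max (f x) 1 ∂P = 2 - m := by
    linarith [integral_min_one_add_integral_max_one hf, probReal_univ (μ := P)]
  have hm0 : 0 ≤ m := integral_nonneg fun x ↦ le_min ENNReal.toReal_nonneg zero_le_one
  have hM0 : 0 ≤ 2 - m := hM ▸ integral_nonneg fun x ↦ zero_le_one.trans (le_max_right _ _)
  have hexp : exp (-(∫ x, llr Q P x ∂Q)) ≤ m * (2 - m) := calc
    exp (-(∫ x, llr Q P x ∂Q)) = exp (-(∫ x, llr Q P x ∂Q) / 2) ^ 2 := by
      rw [← exp_nat_mul]; ring_nf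
    _ ≤ (√m * √(2 - m)) ^ 2 := by
      gcongr
      rw [← hM]
      exact (exp_neg_integral_llr_div_two_le_integral_sqrt_rnDeriv hQP h_int).trans
        (integral_sqrt_le_sqrt_integral_min_mul_max
          (.of_forall fun _ ↦ ENNReal.toReal_nonneg) hf)
    _ = m * (2 - m) := by
      rw [mul_pow, sq_sqrt hm0, sq_sqrt hM0]
  calc |(P A).toReal - (Q A).toReal| ≤ |1 - m| := hTV.trans (le_abs_self _)
    _ = √((1 - m) ^ 2) := (sqrt_sq_eq_abs _).symm
    _ ≤ √(1 - exp (-(∫ x, llr Q P x ∂Q))) := by gcongr; nlinarith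

/-- Bretagnolle–Huber inequality: the total variation distance
(sup over measurable sets of |P(A) − Q(A)|) is bounded by
√(1 − exp(−KL(Q‖P))), where KL(Q‖P) = ∫ llr dQ for Q ≪ P. -/
theorem bretagnolle_huber
    {α : Type*} [MeasurableSpace α]
    (P Q : Measure α) [IsProbabilityMeasure P] [IsProbabilityMeasure Q]
    (hQP : Q ≪ P) (h_int : Integrable (llr Q P) Q)
    (A : Set α) (hA : MeasurableSet A) :
    |(P A).toReal - (Q A).toReal| ≤
      Real.sqrt (1 - Real.exp (-(∫ x, llr Q P x ∂Q))) :=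
  bretagnolle_huber_general P Q hQP h_int A
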